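/- Every Schwartz function u : ℝ³ → ℂ satisfies V(u) ≥ 2·E(u) − (3/64)·M(u). -/

import Mathlib

open MeasureTheory

noncomputable section

abbrev E3 := EuclideanSpace ℝ (Fin 3)

/-- The mass. -/
def M (u : SchwartzMap E3 ℂ) : ℝ := ∫ x : E3, ‖u x‖ ^ 2

/-- The energy. -/
def En (u : SchwartzMap E3 ℂ) : ℝ :=
  ∫ x : E3, ((1 / 2) * ‖fderiv ℝ u x‖ ^ 2 + (1 / 6) * ‖u x‖ ^ 6 - (1 / 4) * ‖u x‖ ^ 4)

/-- The virial. -/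
def V (u : SchwartzMap E3 ℂ) : ℝ :=
  ∫ x : E3, (‖fderiv ℝ u x‖ ^ 2 + ‖u x‖ ^ 6 - (3 / 4) * ‖u x‖ ^ 4)

/-!
The gradient terms cancel in `V u - 2 En u`, so the bound follows by integrating the pointwise
inequality `t⁴/4 ≤ (2/3) t⁶ + (3/64) t²` at `t = |u x|`, all integrands being integrable because
`u` and `∇u` are Schwartz functions.
-/

-- With `s = t²`: the quadratic `(2/3) s² - (1/4) s + 3/64` has negative discriminant.
lemma pow_four_div_four_le (t : ℝ) : t ^ 4 / 4 ≤ 2 / 3 * t ^ 6 + 3 / 64 * t ^ 2 := by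
  nlinarith [sq_nonneg (t ^ 3 - 3 / 16 * t), sq_nonneg t]

theorem SchwartzMap.integrable_norm_fderiv_pow {E F : Type*} [NormedAddCommGroup E]
    [NormedSpace ℝ E] [MeasurableSpace E] [BorelSpace E] [SecondCountableTopology E]
    [NormedAddCommGroup F] [NormedSpace ℝ F] (μ : Measure E) [μ.HasTemperateGrowth]
    (f : SchwartzMap E F) {n : ℕ} (hn : n ≠ 0) :
    Integrable (fun x ↦ ‖fderiv ℝ f x‖ ^ n) μ := by
  simpa using ((SchwartzMap.fderivCLM ℝ E F f).memLp n μ).integrable_norm_pow hn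

theorem virial_lower_bound (u : SchwartzMap E3 ℂ) :
    V u ≥ 2 * En u - (3 / 64) * M u := by
  have hu (n : ℕ) (hn : n ≠ 0) : Integrable (fun x : E3 ↦ ‖u x‖ ^ n) :=
    (u.memLp n).integrable_norm_pow hn
  have hdu := u.integrable_norm_fderiv_pow volume two_ne_zero
  have hV : Integrable fun x : E3 ↦
      ‖fderiv ℝ u x‖ ^ 2 + ‖u x‖ ^ 6 - (3 / 4) * ‖u x‖ ^ 4 :=
    (hdu.add (hu 6 (by norm_num))).sub ((hu 4 (by norm_num)).const_mul _)
  have hEn : Integrable fun x : E3 ↦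
      (1 / 2) * ‖fderiv ℝ u x‖ ^ 2 + (1 / 6) * ‖u x‖ ^ 6 - (1 / 4) * ‖u x‖ ^ 4 :=
    ((hdu.const_mul _).add ((hu 6 (by norm_num)).const_mul _)).sub
      ((hu 4 (by norm_num)).const_mul _)
  calc 2 * En u - (3 / 64) * M u
      = ∫ x : E3, (2 * ((1 / 2) * ‖fderiv ℝ u x‖ ^ 2 + (1 / 6) * ‖u x‖ ^ 6
          - (1 / 4) * ‖u x‖ ^ 4) - (3 / 64) * ‖u x‖ ^ 2) := by
        rw [integral_sub (hEn.const_mul _) ((hu 2 two_ne_zero).const_mul _),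
          integral_const_mul, integral_const_mul, En, M]
    _ ≤ V u := integral_mono ((hEn.const_mul _).sub ((hu 2 two_ne_zero).const_mul _)) hV
        fun x ↦ by linarith [pow_four_div_four_le ‖u x‖]
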